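/- arXiv:1403.8080 — 2 statements merged into one kernel-verified Lean document; each statement's English description precedes it below -/
import Mathlib

section
/- Let 0 < q < 1, s ∈ ℝ and n ≥ 1. Then H_{n+1}(x,s|q^{-1}) = x·H_n(x, s q^{-2}|q^{-1}) - s·q^{1-n}·{n}_q·H_{n-1}(x, s q^{-2}|q^{-1}) as polynomials in x. -/
/-!
With `p = 1/q` one has `q^{1-n} {n}_q = {n}_p` and `q^{-2} = p²`, so the claim is the recursion
`H_{n+1}(x,s|p) = x H_n(x,sp²|p) - s {n}_p H_{n-1}(x,sp²|p)`, which holds for every `p ≥ 0`.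
Writing `{n}_p!/{n-2k}_p!` as a falling q-factorial makes `c_{n,k}(p)` vanish for `2k > n`, so
all three polynomials can be summed over the same range of `k`. Comparing the coefficients of
`x^{n-1-2k}` and clearing common factors leaves `{n+1}_p = {2k+2}_p + p^{2k+2} {n-1-2k}_p`.
-/

/-- The q-number `{n}_q = 1 + q + ⋯ + q^{n-1}`. -/
noncomputable def qNum (q : ℝ) (n : ℕ) : ℝ := ∑ k ∈ Finset.range n, q ^ k

/-- The q-factorial `{n}_q! = Π_{k=1}^n {k}_q`. -/
noncomputable def qFact (q : ℝ) (n : ℕ) : ℝ := ∏ k ∈ Finset.range n, qNum q (k + 1)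

/-- The even q-double factorial `{2k}_q!! = Π_{l=1}^k {2l}_q`. -/
noncomputable def qDoubleFact (q : ℝ) (k : ℕ) : ℝ := ∏ l ∈ Finset.range k, qNum q (2 * (l + 1))

/-- The coefficient `c_{n,k}(q) = (-1)^k q^{k(k-1)} {n}_q!/({n-2k}_q!·{2k}_q!!)`. -/
noncomputable def qHermiteCoeff (q : ℝ) (n k : ℕ) : ℝ :=
  (-1 : ℝ) ^ k * q ^ (k * (k - 1)) * qFact q n / (qFact q (n - 2 * k) * qDoubleFact q k)

/-- The `q⁻¹`-Hermite polynomial `H_n(x,s|q⁻¹) = Σ_{k=0}^{⌊n/2⌋} c_{n,k}(q⁻¹) s^k x^{n-2k}`. -/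
noncomputable def qInvHermite (q s : ℝ) (n : ℕ) : Polynomial ℝ :=
  ∑ k ∈ Finset.range (n / 2 + 1),
    Polynomial.C (qHermiteCoeff (1 / q) n k * s ^ k) * Polynomial.X ^ (n - 2 * k)

open Polynomial Finset

lemma qNum_zero (p : ℝ) : qNum p 0 = 0 := by
  simp [qNum]

lemma qNum_pos {p : ℝ} (hp : 0 ≤ p) {m : ℕ} (hm : m ≠ 0) : 0 < qNum p m := by
  obtain ⟨m, rfl⟩ := Nat.exists_eq_succ_of_ne_zero hm
  rw [qNum, sum_range_succ']
  positivity

lemma qNum_add (p : ℝ) (a b : ℕ) : qNum p (a + b) = qNum p a + p ^ a * qNum p b := by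
  simp only [qNum, sum_range_add, mul_sum, pow_add]

lemma zpow_one_sub_mul_qNum {q : ℝ} (hq : q ≠ 0) (n : ℕ) :
    q ^ ((1 : ℤ) - n) * qNum q n = qNum (1 / q) n := by
  rw [qNum, qNum, mul_sum, ← sum_range_reflect]
  refine sum_congr rfl fun k hk => ?_
  have hkn : k < n := mem_range.mp hk
  rw [one_div, inv_pow, ← zpow_natCast, ← zpow_natCast, ← zpow_neg, ← zpow_add₀ hq]
  congr 1
  omega

lemma qFact_succ (p : ℝ) (n : ℕ) : qFact p (n + 1) = qFact p n * qNum p (n + 1) :=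
  prod_range_succ _ n

lemma qDoubleFact_succ (p : ℝ) (k : ℕ) :
    qDoubleFact p (k + 1) = qDoubleFact p k * qNum p (2 * k + 2) :=
  prod_range_succ _ k

lemma qFact_pos {p : ℝ} (hp : 0 ≤ p) (n : ℕ) : 0 < qFact p n :=
  prod_pos fun _ _ => qNum_pos hp (Nat.succ_ne_zero _)

lemma qDoubleFact_pos {p : ℝ} (hp : 0 ≤ p) (k : ℕ) : 0 < qDoubleFact p k :=
  prod_pos fun _ _ => qNum_pos hp (by omega)

noncomputable def qDescFact (p : ℝ) (n m : ℕ) : ℝ := ∏ i ∈ range m, qNum p (n - i)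

lemma qDescFact_succ (p : ℝ) (n m : ℕ) :
    qDescFact p n (m + 1) = qDescFact p n m * qNum p (n - m) :=
  prod_range_succ _ m

lemma qDescFact_succ_succ (p : ℝ) (n m : ℕ) :
    qDescFact p (n + 1) (m + 1) = qNum p (n + 1) * qDescFact p n m := by
  simp only [qDescFact, prod_range_succ', Nat.sub_zero, Nat.add_sub_add_right, mul_comm]

lemma qDescFact_eq_zero {p : ℝ} {n m : ℕ} (h : n < m) : qDescFact p n m = 0 :=
  prod_eq_zero (mem_range.mpr h) (by rw [Nat.sub_self, qNum_zero])

lemma qFact_eq_qFact_mul_qDescFact (p : ℝ) {n m : ℕ} (h : m ≤ n) :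
    qFact p n = qFact p (n - m) * qDescFact p n m := by
  induction m with
  | zero => simp [qDescFact]
  | succ m ih =>
    rw [ih (by omega), qDescFact_succ, show n - m = n - (m + 1) + 1 by omega, qFact_succ]
    ring

lemma qDescFact_succ_two_mul_add_two (p : ℝ) (n k : ℕ) :
    qDescFact p (n + 1) (2 * k + 2) =
      p ^ (2 * k + 2) * qDescFact p n (2 * k + 2) +
        qNum p (2 * k + 2) * qNum p n * qDescFact p (n - 1) (2 * k) := by
  rcases n with _ | m
  · simp [qDescFact_succ_succ, qDescFact_eq_zero, qNum_zero]
  rw [qDescFact_succ_succ, qDescFact_succ_succ, qDescFact_succ_succ, qDescFact_succ,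
    Nat.add_sub_cancel]
  rcases le_or_gt (2 * k) m with hkm | hmk
  · have hsplit :
        qNum p (m + 1 + 1) = qNum p (2 * k + 2) + p ^ (2 * k + 2) * qNum p (m - 2 * k) := by
      rw [← qNum_add]
      congr 1
      omega
    rw [hsplit]
    ring
  · simp [qDescFact_eq_zero hmk]

/-- `c_{n,k}(p)` through the falling q-factorial: it vanishes for `2k > n`, where
`qHermiteCoeff` takes junk values from the truncated subtraction `n - 2k`. -/
noncomputable def qHermiteCoeff' (p : ℝ) (n k : ℕ) : ℝ :=
  (-1) ^ k * p ^ (k * (k - 1)) * qDescFact p n (2 * k) / qDoubleFact p k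

lemma qHermiteCoeff_eq_qHermiteCoeff' {p : ℝ} (hp : 0 ≤ p) {n k : ℕ} (h : 2 * k ≤ n) :
    qHermiteCoeff p n k = qHermiteCoeff' p n k := by
  have hF := (qFact_pos hp (n - 2 * k)).ne'
  have hD := (qDoubleFact_pos hp k).ne'
  rw [qHermiteCoeff, qHermiteCoeff', qFact_eq_qFact_mul_qDescFact p h]
  field_simp

lemma qHermiteCoeff'_eq_zero {p : ℝ} {n k : ℕ} (h : n < 2 * k) : qHermiteCoeff' p n k = 0 := by
  simp [qHermiteCoeff', qDescFact_eq_zero h]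

lemma qHermiteCoeff'_zero (p : ℝ) (n : ℕ) : qHermiteCoeff' p n 0 = 1 := by
  simp [qHermiteCoeff', qDescFact, qDoubleFact]

lemma qHermiteCoeff'_succ_succ {p : ℝ} (hp : 0 ≤ p) (n k : ℕ) :
    qHermiteCoeff' p (n + 1) (k + 1) =
      p ^ (2 * k + 2) * qHermiteCoeff' p n (k + 1) -
        qNum p n * p ^ (2 * k) * qHermiteCoeff' p (n - 1) k := by
  have hD := (qDoubleFact_pos hp k).ne'
  have hN := (qNum_pos hp (show 2 * k + 2 ≠ 0 by omega)).ne'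
  have hexp : p ^ ((k + 1) * (k + 1 - 1)) = p ^ (k * (k - 1)) * p ^ (2 * k) := by
    rw [← pow_add]
    congr 1
    cases k
    · simp
    · simp; ring
  simp only [qHermiteCoeff', show 2 * (k + 1) = 2 * k + 2 by ring, hexp,
    qDescFact_succ_two_mul_add_two, qDoubleFact_succ]
  field_simp
  ring

/-- `H_n(x,s|p)`, of which `qInvHermite q` is the case `p = 1 / q`. -/
noncomputable def qHermite (p s : ℝ) (n : ℕ) : ℝ[X] :=
  ∑ k ∈ range (n / 2 + 1), C (qHermiteCoeff p n k * s ^ k) * X ^ (n - 2 * k)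

lemma qHermite_eq_sum {p : ℝ} (hp : 0 ≤ p) (s : ℝ) {n N : ℕ} (hN : n / 2 < N) :
    qHermite p s n = ∑ k ∈ range N, C (qHermiteCoeff' p n k * s ^ k) * X ^ (n - 2 * k) := by
  rw [qHermite]
  refine sum_subset_zero_on_sdiff (range_subset_range.mpr hN) (fun k hk => ?_) fun k hk => ?_
  · simp only [mem_sdiff, mem_range] at hk
    simp [qHermiteCoeff'_eq_zero (show n < 2 * k by omega)]
  · rw [qHermiteCoeff_eq_qHermiteCoeff' hp (by simp at hk; omega)]

lemma X_mul_C_qHermiteCoeff'_mul_X_pow (p t : ℝ) (n k : ℕ) :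
    X * (C (qHermiteCoeff' p n k * t) * X ^ (n - 2 * k)) =
      C (qHermiteCoeff' p n k * t) * X ^ (n + 1 - 2 * k) := by
  rcases le_or_gt (2 * k) n with h | h
  · rw [show n + 1 - 2 * k = n - 2 * k + 1 by omega, pow_succ]
    ring
  · simp [qHermiteCoeff'_eq_zero h]

theorem qHermite_succ {p : ℝ} (hp : 0 ≤ p) (s : ℝ) (n : ℕ) :
    qHermite p s (n + 1) =
      X * qHermite p (s * p ^ 2) n - C (s * qNum p n) * qHermite p (s * p ^ 2) (n - 1) := by
  rw [qHermite_eq_sum hp s (N := n + 2) (by omega), qHermite_eq_sum hp _ (N := n + 2) (by omega),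
    qHermite_eq_sum hp _ (N := n + 1) (by omega), mul_sum, mul_sum, sum_range_succ',
    sum_range_succ' _ (n + 1), add_sub_right_comm, ← sum_sub_distrib]
  congr 1
  · refine sum_congr rfl fun k _ => ?_
    rw [X_mul_C_qHermiteCoeff'_mul_X_pow, ← mul_assoc, ← C_mul,
      show n + 1 - 2 * (k + 1) = n - 1 - 2 * k by omega, ← sub_mul, ← C_sub,
      qHermiteCoeff'_succ_succ hp]
    congr 2
    ring
  · simp [qHermiteCoeff'_zero, pow_succ, mul_comm]

theorem qInvHermite_recursion_general (q : ℝ) (hq0 : 0 < q) (s : ℝ) (n : ℕ) :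
    qInvHermite q s (n + 1) =
      Polynomial.X * qInvHermite q (s * q ^ (-2 : ℤ)) n -
        Polynomial.C (s * q ^ ((1 : ℤ) - (n : ℤ)) * qNum q n) *
          qInvHermite q (s * q ^ (-2 : ℤ)) (n - 1) := by
  have hinv : q ^ (-2 : ℤ) = (1 / q) ^ 2 := by
    rw [one_div, inv_pow, zpow_neg, zpow_ofNat]
  rw [hinv, mul_assoc s, zpow_one_sub_mul_qNum hq0.ne']
  exact qHermite_succ (one_div_pos.mpr hq0).le s n

/-- Recursion for the `q⁻¹`-Hermite polynomials:
`H_{n+1}(x,s|q⁻¹) = x·H_n(x,sq⁻²|q⁻¹) - s·q^{1-n}·{n}_q·H_{n-1}(x,sq⁻²|q⁻¹)`. -/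
theorem qInvHermite_recursion (q : ℝ) (hq0 : 0 < q) (hq1 : q < 1) (s : ℝ) (n : ℕ) (hn : 1 ≤ n) :
    qInvHermite q s (n + 1) =
      Polynomial.X * qInvHermite q (s * q ^ (-2 : ℤ)) n -
        Polynomial.C (s * q ^ ((1 : ℤ) - (n : ℤ)) * qNum q n) *
          qInvHermite q (s * q ^ (-2 : ℤ)) (n - 1) :=
  qInvHermite_recursion_general q hq0 s n
end

section
/- Let s > 0 and κ > 0 be real, set q = e^{-2sκ²} (so that 0 < q < 1), and let b ∈ ℂ, y ∈ ℝ, n ∈ ℕ. Then (1/√(2πs))·∫_ℝ H_n(b·e^{iκx}, s|q)·e^{ixy - x²/(2s)} dx = q^{n²/4}·H_n(b·e^{-sκy}, q^{n-3}·s | q^{-1})·e^{-s y²/2}, where q^{n²/4} and q^{n-3} denote real powers of q, and the polynomials are evaluated at complex first arguments. -/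
open scoped Real

/-- `H_n(z,s|q) = Σ_{k=0}^{⌊n/2⌋} c_{n,k}(q) s^k z^{n-2k}` for complex `z`, `s`. -/
noncomputable def qHermiteC (q : ℝ) (s : ℂ) (n : ℕ) (z : ℂ) : ℂ :=
  ∑ k ∈ Finset.range (n / 2 + 1), (qHermiteCoeff q n k : ℂ) * s ^ k * z ^ (n - 2 * k)

/-- `H_n(z,s|q⁻¹) = Σ_{k=0}^{⌊n/2⌋} c_{n,k}(q⁻¹) s^k z^{n-2k}` for complex `z`, `s`. -/
noncomputable def qInvHermiteC (q : ℝ) (s : ℂ) (n : ℕ) (z : ℂ) : ℂ :=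
  ∑ k ∈ Finset.range (n / 2 + 1), (qHermiteCoeff (1 / q) n k : ℂ) * s ^ k * z ^ (n - 2 * k)

/-!
Expanding `H_n(b e^{iκx}, s|q)` into monomials turns the integral into a finite sum of Gaussian
Fourier integrals `∫ e^{i(mκ+y)x - x²/(2s)} dx = √(2πs) e^{-s(mκ+y)²/2}`, `m = n - 2k`.
Since `q = e^{-2sκ²}`, the factor `e^{-sκ²m²/2}` is `q^{m²/4}`, and it is absorbed by the
coefficient identity `c_{n,k}(q) q^{(n-2k)²/4} = q^{n²/4} c_{n,k}(q⁻¹) q^{(n-3)k}`, a consequence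
of `{j}_{q⁻¹} = q^{1-j} {j}_q`.
-/

open Finset

section QArith

variable {q : ℝ}

lemma qNum_pos_s18 (hq : 0 < q) (m : ℕ) : 0 < qNum q (m + 1) :=
  sum_pos (fun _ _ => by positivity) nonempty_range_add_one

lemma qFact_pos_s18 (hq : 0 < q) (n : ℕ) : 0 < qFact q n :=
  prod_pos fun k _ => qNum_pos_s18 hq k

lemma qDoubleFact_pos_s18 (hq : 0 < q) (k : ℕ) : 0 < qDoubleFact q k :=
  prod_pos fun l _ => qNum_pos_s18 hq (2 * l + 1)

lemma pow_mul_qNum_one_div (hq : q ≠ 0) (m : ℕ) :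
    q ^ m * qNum (1 / q) (m + 1) = qNum q (m + 1) := by
  rw [qNum, qNum, mul_sum, ← sum_range_reflect]
  refine sum_congr rfl fun k hk => ?_
  have hkm : k ≤ m := Nat.lt_succ_iff.mp (mem_range.mp hk)
  rw [one_div, inv_pow, ← pow_sub₀ q hq (by omega), show m - (m + 1 - 1 - k) = k by omega]

lemma pow_choose_two_mul_qFact_one_div (hq : q ≠ 0) (n : ℕ) :
    q ^ n.choose 2 * qFact (1 / q) n = qFact q n := by
  induction n with
  | zero => simp [qFact]
  | succ n ih =>
    rw [qFact, qFact, prod_range_succ, prod_range_succ, ← qFact, ← qFact, ← ih,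
      ← pow_mul_qNum_one_div hq n, Nat.choose_succ_succ', Nat.choose_one_right]
    ring

lemma pow_sq_mul_qDoubleFact_one_div (hq : q ≠ 0) (k : ℕ) :
    q ^ (k ^ 2) * qDoubleFact (1 / q) k = qDoubleFact q k := by
  induction k with
  | zero => simp [qDoubleFact]
  | succ k ih =>
    rw [qDoubleFact, qDoubleFact, prod_range_succ, prod_range_succ, ← qDoubleFact,
      ← qDoubleFact, ← ih, show 2 * (k + 1) = 2 * k + 1 + 1 by ring,
      ← pow_mul_qNum_one_div hq (2 * k + 1)]
    ring

lemma qHermiteCoeff_one_div_mul_pow (hq : 0 < q) {n k : ℕ} (hk : 2 * k ≤ n) :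
    qHermiteCoeff (1 / q) n k * q ^ (2 * n * k) = qHermiteCoeff q n k * q ^ (k ^ 2 + 3 * k) := by
  obtain ⟨m, rfl⟩ : ∃ m, n = m + 2 * k := ⟨n - 2 * k, by omega⟩
  have hpow : q ^ (2 * (m + 2 * k) * k) * q ^ m.choose 2 * q ^ (k ^ 2)
      = q ^ (k * (k - 1)) * q ^ (k * (k - 1)) * q ^ (m + 2 * k).choose 2 * q ^ (k ^ 2 + 3 * k) := by
    simp only [← pow_add]
    congr 1
    rcases k with _ | k
    · simp
    · apply Nat.cast_injective (R := ℚ)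
      push_cast [Nat.cast_choose_two]
      ring
  have hF := (qFact_pos_s18 (one_div_pos.mpr hq) m).ne'
  have hD := (qDoubleFact_pos_s18 (one_div_pos.mpr hq) k).ne'
  rw [qHermiteCoeff, qHermiteCoeff, Nat.add_sub_cancel, one_div_pow,
    ← pow_choose_two_mul_qFact_one_div hq.ne', ← pow_choose_two_mul_qFact_one_div hq.ne' m,
    ← pow_sq_mul_qDoubleFact_one_div hq.ne']
  field_simp
  linear_combination qFact (1 / q) (m + 2 * k) * hpow

lemma rpow_mul_qHermiteCoeff_one_div (hq : 0 < q) {n k : ℕ} (hk : 2 * k ≤ n) :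
    q ^ ((n : ℝ) ^ 2 / 4) * qHermiteCoeff (1 / q) n k * (q ^ ((n : ℤ) - 3)) ^ k
      = qHermiteCoeff q n k * q ^ (((n - 2 * k : ℕ) : ℝ) ^ 2 / 4) := by
  have hpow : q ^ ((n : ℝ) ^ 2 / 4) * (q ^ ((n : ℤ) - 3)) ^ k * q ^ (k ^ 2 + 3 * k)
      = q ^ (((n - 2 * k : ℕ) : ℝ) ^ 2 / 4) * q ^ (2 * n * k) := by
    rw [← Real.rpow_intCast, ← Real.rpow_natCast _ k, ← Real.rpow_mul hq.le,
      ← Real.rpow_natCast q (k ^ 2 + 3 * k), ← Real.rpow_natCast q (2 * n * k),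
      ← Real.rpow_add hq, ← Real.rpow_add hq, ← Real.rpow_add hq]
    congr 1
    push_cast [hk]
    ring
  have hc := qHermiteCoeff_one_div_mul_pow hq hk
  have hq2 : q ^ (2 * n * k) ≠ 0 := pow_ne_zero _ hq.ne'
  rw [← mul_left_inj' hq2]
  linear_combination q ^ ((n : ℝ) ^ 2 / 4) * (q ^ ((n : ℤ) - 3)) ^ k * hc
    + qHermiteCoeff q n k * hpow

end QArith

open Complex

lemma qHermiteC_mul_cexp_mul_cexp (q : ℝ) (s b g : ℂ) (n : ℕ) (κ y x : ℝ) :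
    qHermiteC q s n (b * cexp (I * κ * x)) * cexp (I * x * y - g) =
      ∑ k ∈ range (n / 2 + 1), (qHermiteCoeff q n k * s ^ k * b ^ (n - 2 * k) : ℂ) *
        cexp (I * ((n - 2 * k : ℕ) * κ + y) * x - g) := by
  rw [qHermiteC, sum_mul]
  refine sum_congr rfl fun k _ => ?_
  rw [show I * ((n - 2 * k : ℕ) * κ + y) * x - g = (n - 2 * k : ℕ) * (I * κ * x) + (I * x * y - g)
    by ring, exp_add, exp_nat_mul, mul_pow]
  ring

lemma one_div_two_mul_re_pos {s : ℝ} (hs : 0 < s) : 0 < (1 / (2 * s) : ℂ).re := by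
  rw [show (1 / (2 * s) : ℂ) = ((1 / (2 * s) : ℝ) : ℂ) by push_cast; rfl, ofReal_re]
  positivity

lemma integrable_cexp_I_mul_sub_sq_div {s : ℝ} (hs : 0 < s) (t : ℂ) :
    MeasureTheory.Integrable fun x : ℝ => cexp (I * t * x - x ^ 2 / (2 * s)) := by
  convert integrable_cexp_quadratic (one_div_two_mul_re_pos hs) (I * t) 0 using 2 with x
  ring_nf

lemma integral_cexp_I_mul_sub_sq_div {s : ℝ} (hs : 0 < s) (t : ℂ) :
    ∫ x : ℝ, cexp (I * t * x - x ^ 2 / (2 * s)) = √(2 * π * s) * cexp (-s * t ^ 2 / 2) := by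
  have hsplit (x : ℝ) :
      cexp (I * t * x - x ^ 2 / (2 * s)) = cexp (I * t * x) * cexp (-(1 / (2 * s)) * x ^ 2) := by
    rw [← exp_add]
    ring_nf
  simp_rw [hsplit, fourierIntegral_gaussian (one_div_two_mul_re_pos hs)]
  congr 1
  · rw [show (π : ℂ) / (1 / (2 * s)) = ((2 * π * s : ℝ) : ℂ) by push_cast; field_simp,
      Real.sqrt_eq_rpow, ofReal_cpow (by positivity)]
    norm_num
  · congr 1
    field_simp
    ring

lemma cexp_neg_mul_sq_div_two {q s κ : ℝ} (hq : q = Real.exp (-(2 * s * κ ^ 2))) (y : ℝ) (m : ℕ) :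
    cexp (-s * (m * κ + y) ^ 2 / 2)
      = (q ^ ((m : ℝ) ^ 2 / 4) : ℝ) * cexp (-(s * κ * y)) ^ m * cexp (-s * y ^ 2 / 2) := by
  rw [hq, ← Real.exp_mul, ofReal_exp, ← exp_nat_mul, ← exp_add, ← exp_add]
  congr 1
  push_cast
  ring

theorem integral_qHermiteC_general (s κ : ℝ) (hs : 0 < s) (q : ℝ)
    (hq : q = Real.exp (-(2 * s * κ ^ 2))) (b : ℂ) (y : ℝ) (n : ℕ) :
    (1 / Real.sqrt (2 * π * s) : ℂ) *
        ∫ x : ℝ, qHermiteC q (s : ℂ) n (b * Complex.exp (Complex.I * (κ : ℂ) * (x : ℂ))) *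
          Complex.exp (Complex.I * (x : ℂ) * (y : ℂ) - (x : ℂ) ^ 2 / (2 * (s : ℂ))) =
      ((q ^ ((n : ℝ) ^ 2 / 4) : ℝ) : ℂ) *
        qInvHermiteC q (((q ^ ((n : ℤ) - 3) * s : ℝ) : ℂ)) n
          (b * Complex.exp (-((s : ℂ) * (κ : ℂ) * (y : ℂ)))) *
        Complex.exp (-(s : ℂ) * (y : ℂ) ^ 2 / 2) := by
  have hq0 : 0 < q := hq ▸ Real.exp_pos _
  have hsqrt : (√(2 * π * s) : ℂ) ≠ 0 := by
    exact_mod_cast (Real.sqrt_pos.mpr (by positivity)).ne'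
  simp_rw [qHermiteC_mul_cexp_mul_cexp]
  rw [MeasureTheory.integral_finsetSum _ fun k _ =>
    (integrable_cexp_I_mul_sub_sq_div hs _).const_mul _]
  simp_rw [MeasureTheory.integral_const_mul, integral_cexp_I_mul_sub_sq_div hs,
    cexp_neg_mul_sq_div_two hq, qInvHermiteC, mul_sum, sum_mul]
  refine sum_congr rfl fun k hk => ?_
  have hkn : 2 * k ≤ n := by have := mem_range.mp hk; omega
  have hcoeff := congrArg ofReal (rpow_mul_qHermiteCoeff_one_div hq0 hkn)
  rw [one_div, mul_left_comm _ (√(2 * π * s) : ℂ), inv_mul_cancel_left₀ hsqrt]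
  push_cast at hcoeff ⊢
  linear_combination (s : ℂ) ^ k * b ^ (n - 2 * k) * cexp (-(s * κ * y)) ^ (n - 2 * k) *
    cexp (-s * y ^ 2 / 2) * hcoeff.symm

/-- Fourier transform connecting the q- and q⁻¹-Hermite polynomials: with `q = e^{-2sκ²}`,
`(1/√(2πs)) ∫_ℝ H_n(b e^{iκx},s|q) e^{ixy - x²/(2s)} dx
  = q^{n²/4} H_n(b e^{-sκy}, q^{n-3}s | q⁻¹) e^{-sy²/2}`. -/
theorem integral_qHermiteC (s κ : ℝ) (hs : 0 < s) (hκ : 0 < κ) (q : ℝ)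
    (hq : q = Real.exp (-(2 * s * κ ^ 2))) (b : ℂ) (y : ℝ) (n : ℕ) :
    (1 / Real.sqrt (2 * π * s) : ℂ) *
        ∫ x : ℝ, qHermiteC q (s : ℂ) n (b * Complex.exp (Complex.I * (κ : ℂ) * (x : ℂ))) *
          Complex.exp (Complex.I * (x : ℂ) * (y : ℂ) - (x : ℂ) ^ 2 / (2 * (s : ℂ))) =
      ((q ^ ((n : ℝ) ^ 2 / 4) : ℝ) : ℂ) *
        qInvHermiteC q (((q ^ ((n : ℤ) - 3) * s : ℝ) : ℂ)) n
          (b * Complex.exp (-((s : ℂ) * (κ : ℂ) * (y : ℂ)))) *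
        Complex.exp (-(s : ℂ) * (y : ℂ) ^ 2 / 2) :=
  integral_qHermiteC_general s κ hs q hq b y n
end
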